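/- There exist constants C₀ > 0 and E₀ > 0, depending only on f and g, with the following property. Suppose t₋₁ < t₀ < t₁ and e₋₁, e₀, e₁ ≥ E₀ are such that (t₀, e₀) is the image of (t₋₁, e₋₁) and (t₁, e₁) is the image of (t₀, e₀) under the tennis map in time–energy coordinates. Then |h₂₂(t₋₁, t₀) + h₁₁(t₀, t₁) − √(2e₀)·(g + 2f''(t₀))| ≤ C₀, |−h₁₂(t₋₁, t₀) − √(2e₀)·(g/2)| ≤ C₀, and |−h₁₂(t₀, t₁) − √(2e₀)·(g/2)| ≤ C₀. -/
import Mathlib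


open intervalIntegral

/-- The generating function of the tennis map. -/
noncomputable def genh (g : ℝ) (f : ℝ → ℝ) (t tb : ℝ) : ℝ :=
  g ^ 2 / 24 * (tb - t) ^ 3 + g / 2 * (f tb + f t) * (tb - t)
    - (f tb - f t) ^ 2 / (2 * (tb - t))
    - g * ∫ s in t..tb, f s
    + 1 / 2 * ∫ s in t..tb, (deriv f s) ^ 2

/-- Partial derivative of `h` with respect to its first argument. -/
noncomputable def h1 (h : ℝ → ℝ → ℝ) (x y : ℝ) : ℝ := deriv (fun u => h u y) x

/-- Partial derivative of `h` with respect to its second argument. -/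
noncomputable def h2 (h : ℝ → ℝ → ℝ) (x y : ℝ) : ℝ := deriv (fun v => h x v) y

/-- Second partial derivative of `h` with respect to its first argument, twice. -/
noncomputable def h11 (h : ℝ → ℝ → ℝ) (x y : ℝ) : ℝ := deriv (fun u => h1 h u y) x

/-- Mixed second partial derivative of `h`. -/
noncomputable def h12 (h : ℝ → ℝ → ℝ) (x y : ℝ) : ℝ := deriv (fun v => h1 h x v) y

/-- Second partial derivative of `h` with respect to its second argument, twice. -/
noncomputable def h22 (h : ℝ → ℝ → ℝ) (x y : ℝ) : ℝ := deriv (fun v => h2 h x v) y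

/-- `(t̄, ē)` is the image of `(t, e)` under the tennis map in time–energy
coordinates. -/
def TennisRel (g : ℝ) (f : ℝ → ℝ) (t e tb eb : ℝ) : Prop :=
  t < tb ∧
  tb = t + 2 / g * Real.sqrt (2 * e)
      - 2 / g * ((f tb - f t) / (tb - t)) + 2 / g * deriv f t ∧
  eb = 1 / 2 * (Real.sqrt (2 * e) - 2 * ((f tb - f t) / (tb - t))
      + deriv f tb + deriv f t) ^ 2

noncomputable def Dq (f : ℝ → ℝ) (t tb : ℝ) : ℝ := (f tb - f t) / (tb - t)

noncomputable def H1 (g : ℝ) (f : ℝ → ℝ) (t tb : ℝ) : ℝ :=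
  -(g^2/8)*(tb-t)^2 + g/2*(deriv f t)*(tb-t) - g/2*(f tb + f t)
  + Dq f t tb * deriv f t - (Dq f t tb)^2/2 + g * f t
  + g/2*(∫ s in t..tb, (deriv f s)^2) + g/2*(tb-t)*(deriv f t)^2

noncomputable def H2 (g : ℝ) (f : ℝ → ℝ) (t tb : ℝ) : ℝ :=
  g^2/8*(tb-t)^2 + g/2*(deriv f tb)*(tb-t) + g/2*(f tb + f t)
  - Dq f t tb * deriv f tb + (Dq f t tb)^2/2 - g * f tb
  - g/2*(∫ s in t..tb, (deriv f s)^2) - g/2*(tb-t)*(deriv f tb)^2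

noncomputable def H11 (g : ℝ) (f : ℝ → ℝ) (t tb : ℝ) : ℝ :=
  g^2/4*(tb-t) + g/2*(deriv (deriv f) t)*(tb-t)
  - (Dq f t tb - deriv f t)^2/(tb-t) + Dq f t tb * deriv (deriv f) t
  - g*(deriv f t)^2 + g*(tb-t)*(deriv f t)*(deriv (deriv f) t)

noncomputable def H12 (g : ℝ) (f : ℝ → ℝ) (t tb : ℝ) : ℝ :=
  -(g^2/4)*(tb-t) + g/2*(deriv f t - deriv f tb)
  + (deriv f tb - Dq f t tb) * (deriv f t - Dq f t tb)/(tb-t)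
  + g/2*((deriv f tb)^2 + (deriv f t)^2)

noncomputable def H22 (g : ℝ) (f : ℝ → ℝ) (t tb : ℝ) : ℝ :=
  g^2/4*(tb-t) + g/2*(deriv (deriv f) tb)*(tb-t)
  - (deriv f tb - Dq f t tb)^2/(tb-t) - Dq f t tb * deriv (deriv f) tb
  - g*(deriv f tb)^2 - g*(tb-t)*(deriv f tb)*(deriv (deriv f) tb)

section lemmas
variable {g : ℝ} {f : ℝ → ℝ}

lemma hd1 (hf : ContDiff ℝ 3 f) (x : ℝ) : HasDerivAt f (deriv f x) x :=
  ((hf.differentiable (by norm_num)) x).hasDerivAt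

lemma contDiff_deriv (hf : ContDiff ℝ 3 f) : ContDiff ℝ 2 (deriv f) := by
  have h3 : ContDiff ℝ ((2:ℕ) + 1) f := by exact_mod_cast hf
  exact (contDiff_succ_iff_deriv.mp h3).2.2

lemma hd2 (hf : ContDiff ℝ 3 f) (x : ℝ) : HasDerivAt (deriv f) (deriv (deriv f) x) x :=
  (((contDiff_deriv hf).differentiable (by norm_num)) x).hasDerivAt

lemma genh_repr (hf : ContDiff ℝ 3 f) (t tb : ℝ) :
    genh g f t tb = g^2/24*(tb-t)^3 + g/2*(f tb + f t)*(tb-t)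
      - (f tb - f t)^2/(2*(tb-t)) - g*(∫ s in t..tb, f s)
      - g/2*(tb-t)*(∫ s in t..tb, (deriv f s)^2) := by
  have hc : Continuous f := hf.continuous
  unfold genh
  rw [intervalIntegral.integral_add (hc.intervalIntegrable _ _) intervalIntegrable_const,
    intervalIntegral.integral_const]
  simp only [smul_eq_mul]
  ring

lemma hasDerivAt_genh_fst (hf : ContDiff ℝ 3 f) {t tb : ℝ} (h : t ≠ tb) :
    HasDerivAt (fun u => genh g f u tb) (H1 g f t tb) t := by
  have hne : tb - t ≠ 0 := sub_ne_zero.2 (Ne.symm h)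
  have hc : Continuous f := hf.continuous
  have hc' : Continuous (deriv f) := hf.continuous_deriv (by norm_num)
  have hrepr : (fun u => genh g f u tb) = (fun u =>
      g^2/24*(tb-u)^3 + g/2*(f tb + f u)*(tb-u)
      - (f tb - f u)^2/(2*(tb-u)) - g*(∫ s in u..tb, f s)
      - g/2*(tb-u)*(∫ s in u..tb, (deriv f s)^2)) := funext fun u => genh_repr hf u tb
  rw [hrepr]
  have hu : HasDerivAt (fun u : ℝ => tb - u) (-1) t := by
    simpa using (hasDerivAt_id t).const_sub tb
  have d1 : HasDerivAt (fun u : ℝ => g ^ 2 / 24 * (tb - u) ^ 3)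
      (g ^ 2 / 24 * (3 * (tb - t) ^ 2 * (-1))) t := ((hu.pow 3).const_mul _)
  have d2 : HasDerivAt (fun u : ℝ => g / 2 * (f tb + f u) * (tb - u))
      ((g / 2 * deriv f t) * (tb - t) + (g / 2 * (f tb + f t)) * (-1)) t :=
    (((hd1 hf t).const_add (f tb)).const_mul (g/2)).mul hu
  have d3 : HasDerivAt (fun u : ℝ => (f tb - f u) ^ 2 / (2 * (tb - u)))
      (((2 * (f tb - f t) ^ 1 * (-(deriv f t))) * (2 * (tb - t))
        - (f tb - f t) ^ 2 * (2 * (-1))) / (2 * (tb - t)) ^ 2) t :=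
    (((hd1 hf t).const_sub (f tb)).pow 2).div (hu.const_mul 2) (by
      simpa using mul_ne_zero two_ne_zero hne)
  have d4 : HasDerivAt (fun u : ℝ => ∫ s in u..tb, f s) (-(f t)) t :=
    intervalIntegral.integral_hasDerivAt_left (hc.intervalIntegrable _ _)
      (hc.stronglyMeasurableAtFilter _ _) hc.continuousAt
  have d5 : HasDerivAt (fun u : ℝ => ∫ s in u..tb, (deriv f s) ^ 2)
      (-((deriv f t) ^ 2)) t :=
    intervalIntegral.integral_hasDerivAt_left ((hc'.pow 2).intervalIntegrable _ _)
      ((hc'.pow 2).stronglyMeasurableAtFilter _ _) (hc'.pow 2).continuousAt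
  have d6 : HasDerivAt (fun u : ℝ => g/2*(tb-u)*(∫ s in u..tb, (deriv f s)^2))
      ((g/2*(-1))*(∫ s in t..tb, (deriv f s)^2) + (g/2*(tb-t))*(-((deriv f t)^2))) t :=
    (hu.const_mul (g/2)).mul d5
  have key := (((d1.add d2).sub d3).sub (d4.const_mul g)).sub d6
  have heq : H1 g f t tb = (g ^ 2 / 24 * (3 * (tb - t) ^ 2 * (-1)) +
      ((g / 2 * deriv f t) * (tb - t) + (g / 2 * (f tb + f t)) * (-1)) -
      ((2 * (f tb - f t) ^ 1 * (-(deriv f t))) * (2 * (tb - t))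
        - (f tb - f t) ^ 2 * (2 * (-1))) / (2 * (tb - t)) ^ 2 -
      g * (-(f t)) - ((g/2*(-1))*(∫ s in t..tb, (deriv f s)^2)
        + (g/2*(tb-t))*(-((deriv f t)^2)))) := by
    simp only [H1, Dq]
    field_simp
    ring
  rw [heq]
  exact key

lemma hasDerivAt_genh_snd (hf : ContDiff ℝ 3 f) {t tb : ℝ} (h : t ≠ tb) :
    HasDerivAt (fun v => genh g f t v) (H2 g f t tb) tb := by
  have hne : tb - t ≠ 0 := sub_ne_zero.2 (Ne.symm h)
  have hc : Continuous f := hf.continuous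
  have hc' : Continuous (deriv f) := hf.continuous_deriv (by norm_num)
  have hrepr : (fun v => genh g f t v) = (fun v =>
      g^2/24*(v-t)^3 + g/2*(f v + f t)*(v-t)
      - (f v - f t)^2/(2*(v-t)) - g*(∫ s in t..v, f s)
      - g/2*(v-t)*(∫ s in t..v, (deriv f s)^2)) := funext fun v => genh_repr hf t v
  rw [hrepr]
  have hv : HasDerivAt (fun v : ℝ => v - t) 1 tb := (hasDerivAt_id tb).sub_const t
  have d1 : HasDerivAt (fun v : ℝ => g ^ 2 / 24 * (v - t) ^ 3)
      (g ^ 2 / 24 * (3 * (tb - t) ^ 2 * 1)) tb := ((hv.pow 3).const_mul _)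
  have d2 : HasDerivAt (fun v : ℝ => g / 2 * (f v + f t) * (v - t))
      ((g / 2 * deriv f tb) * (tb - t) + (g / 2 * (f tb + f t)) * 1) tb :=
    (((hd1 hf tb).add_const (f t)).const_mul (g/2)).mul hv
  have d3 : HasDerivAt (fun v : ℝ => (f v - f t) ^ 2 / (2 * (v - t)))
      (((2 * (f tb - f t) ^ 1 * deriv f tb) * (2 * (tb - t))
        - (f tb - f t) ^ 2 * (2 * 1)) / (2 * (tb - t)) ^ 2) tb :=
    (((hd1 hf tb).sub_const (f t)).pow 2).div (hv.const_mul 2) (by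
      simpa using mul_ne_zero two_ne_zero hne)
  have d4 : HasDerivAt (fun v : ℝ => ∫ s in t..v, f s) (f tb) tb :=
    intervalIntegral.integral_hasDerivAt_right (hc.intervalIntegrable _ _)
      (hc.stronglyMeasurableAtFilter _ _) hc.continuousAt
  have d5 : HasDerivAt (fun v : ℝ => ∫ s in t..v, (deriv f s) ^ 2)
      ((deriv f tb) ^ 2) tb :=
    intervalIntegral.integral_hasDerivAt_right ((hc'.pow 2).intervalIntegrable _ _)
      ((hc'.pow 2).stronglyMeasurableAtFilter _ _) (hc'.pow 2).continuousAt
  have d6 : HasDerivAt (fun v : ℝ => g/2*(v-t)*(∫ s in t..v, (deriv f s)^2))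
      ((g/2*1)*(∫ s in t..tb, (deriv f s)^2) + (g/2*(tb-t))*((deriv f tb)^2)) tb :=
    (hv.const_mul (g/2)).mul d5
  have key := (((d1.add d2).sub d3).sub (d4.const_mul g)).sub d6
  have heq : H2 g f t tb = (g ^ 2 / 24 * (3 * (tb - t) ^ 2 * 1) +
      ((g / 2 * deriv f tb) * (tb - t) + (g / 2 * (f tb + f t)) * 1) -
      ((2 * (f tb - f t) ^ 1 * deriv f tb) * (2 * (tb - t))
        - (f tb - f t) ^ 2 * (2 * 1)) / (2 * (tb - t)) ^ 2 -
      g * (f tb) - ((g/2*1)*(∫ s in t..tb, (deriv f s)^2)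
        + (g/2*(tb-t))*((deriv f tb)^2))) := by
    simp only [H2, Dq]
    field_simp
    ring
  rw [heq]
  exact key

lemma hasDerivAt_H1_fst (hf : ContDiff ℝ 3 f) {t tb : ℝ} (h : t ≠ tb) :
    HasDerivAt (fun u => H1 g f u tb) (H11 g f t tb) t := by
  have hne : tb - t ≠ 0 := sub_ne_zero.2 (Ne.symm h)
  have hc' : Continuous (deriv f) := hf.continuous_deriv (by norm_num)
  have hfun : (fun u => H1 g f u tb) = (fun u =>
      -(g^2/8)*(tb-u)^2 + g/2*(deriv f u)*(tb-u) - g/2*(f tb + f u)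
      + ((f tb - f u)/(tb-u))*(deriv f u) - ((f tb - f u)/(tb-u))^2/2 + g*(f u)
      + g/2*(∫ s in u..tb, (deriv f s)^2) + g/2*(tb-u)*(deriv f u)^2) := by
    funext u; simp only [H1, Dq]
  rw [hfun]
  have hu : HasDerivAt (fun u : ℝ => tb - u) (-1) t := by
    simpa using (hasDerivAt_id t).const_sub tb
  have hD : HasDerivAt (fun u : ℝ => (f tb - f u)/(tb-u))
      (((-(deriv f t))*(tb-t) - (f tb - f t)*(-1))/(tb-t)^2) t :=
    ((hd1 hf t).const_sub (f tb)).div hu hne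
  have d5 : HasDerivAt (fun u : ℝ => ∫ s in u..tb, (deriv f s) ^ 2)
      (-((deriv f t) ^ 2)) t :=
    intervalIntegral.integral_hasDerivAt_left ((hc'.pow 2).intervalIntegrable _ _)
      ((hc'.pow 2).stronglyMeasurableAtFilter _ _) (hc'.pow 2).continuousAt
  have e1 : HasDerivAt (fun u : ℝ => -(g^2/8)*(tb-u)^2)
      (-(g^2/8)*(2*(tb-t)^1*(-1))) t := (hu.pow 2).const_mul _
  have e2 : HasDerivAt (fun u : ℝ => g/2*(deriv f u)*(tb-u))
      ((g/2*(deriv (deriv f) t))*(tb-t) + (g/2*(deriv f t))*(-1)) t :=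
    (((hd2 hf t).const_mul (g/2))).mul hu
  have e3 : HasDerivAt (fun u : ℝ => g/2*(f tb + f u)) (g/2*(deriv f t)) t :=
    ((hd1 hf t).const_add (f tb)).const_mul (g/2)
  have e4 : HasDerivAt (fun u : ℝ => ((f tb - f u)/(tb-u))*(deriv f u))
      ((((-(deriv f t))*(tb-t) - (f tb - f t)*(-1))/(tb-t)^2)*(deriv f t)
        + ((f tb - f t)/(tb-t))*(deriv (deriv f) t)) t := hD.mul (hd2 hf t)
  have e5 : HasDerivAt (fun u : ℝ => ((f tb - f u)/(tb-u))^2/2)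
      ((2*((f tb - f t)/(tb-t))^1*(((-(deriv f t))*(tb-t) - (f tb - f t)*(-1))/(tb-t)^2))/2) t :=
    (hD.pow 2).div_const 2
  have e6 : HasDerivAt (fun u : ℝ => g*(f u)) (g*(deriv f t)) t := (hd1 hf t).const_mul g
  have e7 : HasDerivAt (fun u : ℝ => g/2*(∫ s in u..tb, (deriv f s)^2))
      (g/2*(-((deriv f t)^2))) t := d5.const_mul (g/2)
  have e8 : HasDerivAt (fun u : ℝ => g/2*(tb-u)*(deriv f u)^2)
      ((g/2*(-1))*((deriv f t)^2) + (g/2*(tb-t))*(2*(deriv f t)^1*(deriv (deriv f) t))) t :=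
    (hu.const_mul (g/2)).mul ((hd2 hf t).pow 2)
  have key := ((((((e1.add e2).sub e3).add e4).sub e5).add e6).add e7).add e8
  have heq : H11 g f t tb = (-(g^2/8)*(2*(tb-t)^1*(-1))
      + ((g/2*(deriv (deriv f) t))*(tb-t) + (g/2*(deriv f t))*(-1))
      - g/2*(deriv f t)
      + ((((-(deriv f t))*(tb-t) - (f tb - f t)*(-1))/(tb-t)^2)*(deriv f t)
        + ((f tb - f t)/(tb-t))*(deriv (deriv f) t))
      - (2*((f tb - f t)/(tb-t))^1*(((-(deriv f t))*(tb-t) - (f tb - f t)*(-1))/(tb-t)^2))/2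
      + g*(deriv f t) + g/2*(-((deriv f t)^2))
      + ((g/2*(-1))*((deriv f t)^2) + (g/2*(tb-t))*(2*(deriv f t)^1*(deriv (deriv f) t)))) := by
    simp only [H11, Dq]
    field_simp
    ring
  rw [heq]
  exact key

lemma hasDerivAt_H1_snd (hf : ContDiff ℝ 3 f) {t tb : ℝ} (h : t ≠ tb) :
    HasDerivAt (fun v => H1 g f t v) (H12 g f t tb) tb := by
  have hne : tb - t ≠ 0 := sub_ne_zero.2 (Ne.symm h)
  have hc' : Continuous (deriv f) := hf.continuous_deriv (by norm_num)
  have hfun : (fun v => H1 g f t v) = (fun v =>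
      -(g^2/8)*(v-t)^2 + g/2*(deriv f t)*(v-t) - g/2*(f v + f t)
      + ((f v - f t)/(v-t))*(deriv f t) - ((f v - f t)/(v-t))^2/2 + g*(f t)
      + g/2*(∫ s in t..v, (deriv f s)^2) + g/2*(v-t)*(deriv f t)^2) := by
    funext v; simp only [H1, Dq]
  rw [hfun]
  have hv : HasDerivAt (fun v : ℝ => v - t) 1 tb := (hasDerivAt_id tb).sub_const t
  have hD : HasDerivAt (fun v : ℝ => (f v - f t)/(v-t))
      (((deriv f tb)*(tb-t) - (f tb - f t)*1)/(tb-t)^2) tb :=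
    ((hd1 hf tb).sub_const (f t)).div hv hne
  have d5 : HasDerivAt (fun v : ℝ => ∫ s in t..v, (deriv f s) ^ 2)
      ((deriv f tb) ^ 2) tb :=
    intervalIntegral.integral_hasDerivAt_right ((hc'.pow 2).intervalIntegrable _ _)
      ((hc'.pow 2).stronglyMeasurableAtFilter _ _) (hc'.pow 2).continuousAt
  have k1 : HasDerivAt (fun v : ℝ => -(g^2/8)*(v-t)^2)
      (-(g^2/8)*(2*(tb-t)^1*1)) tb := (hv.pow 2).const_mul _
  have k2 : HasDerivAt (fun v : ℝ => g/2*(deriv f t)*(v-t)) (g/2*(deriv f t)*1) tb :=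
    hv.const_mul _
  have k3 : HasDerivAt (fun v : ℝ => g/2*(f v + f t)) (g/2*(deriv f tb)) tb :=
    ((hd1 hf tb).add_const (f t)).const_mul (g/2)
  have k4 : HasDerivAt (fun v : ℝ => ((f v - f t)/(v-t))*(deriv f t))
      ((((deriv f tb)*(tb-t) - (f tb - f t)*1)/(tb-t)^2)*(deriv f t)) tb :=
    hD.mul_const _
  have k5 : HasDerivAt (fun v : ℝ => ((f v - f t)/(v-t))^2/2)
      ((2*((f tb - f t)/(tb-t))^1*(((deriv f tb)*(tb-t) - (f tb - f t)*1)/(tb-t)^2))/2) tb :=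
    (hD.pow 2).div_const 2
  have k7 : HasDerivAt (fun v : ℝ => g/2*(∫ s in t..v, (deriv f s)^2))
      (g/2*((deriv f tb)^2)) tb := d5.const_mul (g/2)
  have k8 : HasDerivAt (fun v : ℝ => g/2*(v-t)*(deriv f t)^2)
      ((g/2*1)*((deriv f t)^2)) tb := (hv.const_mul (g/2)).mul_const _
  have key := ((((((k1.add k2).sub k3).add k4).sub k5).add_const (g * f t)).add k7).add k8
  have heq : H12 g f t tb = (-(g^2/8)*(2*(tb-t)^1*1) + g/2*(deriv f t)*1
      - g/2*(deriv f tb)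
      + (((deriv f tb)*(tb-t) - (f tb - f t)*1)/(tb-t)^2)*(deriv f t)
      - (2*((f tb - f t)/(tb-t))^1*(((deriv f tb)*(tb-t) - (f tb - f t)*1)/(tb-t)^2))/2
      + g/2*((deriv f tb)^2) + (g/2*1)*((deriv f t)^2)) := by
    simp only [H12, Dq]
    field_simp
    ring
  rw [heq]
  exact key

lemma hasDerivAt_H2_snd (hf : ContDiff ℝ 3 f) {t tb : ℝ} (h : t ≠ tb) :
    HasDerivAt (fun v => H2 g f t v) (H22 g f t tb) tb := by
  have hne : tb - t ≠ 0 := sub_ne_zero.2 (Ne.symm h)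
  have hc' : Continuous (deriv f) := hf.continuous_deriv (by norm_num)
  have hfun : (fun v => H2 g f t v) = (fun v =>
      g^2/8*(v-t)^2 + g/2*(deriv f v)*(v-t) + g/2*(f v + f t)
      - ((f v - f t)/(v-t))*(deriv f v) + ((f v - f t)/(v-t))^2/2 - g*(f v)
      - g/2*(∫ s in t..v, (deriv f s)^2) - g/2*(v-t)*(deriv f v)^2) := by
    funext v; simp only [H2, Dq]
  rw [hfun]
  have hv : HasDerivAt (fun v : ℝ => v - t) 1 tb := (hasDerivAt_id tb).sub_const t
  have hD : HasDerivAt (fun v : ℝ => (f v - f t)/(v-t))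
      (((deriv f tb)*(tb-t) - (f tb - f t)*1)/(tb-t)^2) tb :=
    ((hd1 hf tb).sub_const (f t)).div hv hne
  have d5 : HasDerivAt (fun v : ℝ => ∫ s in t..v, (deriv f s) ^ 2)
      ((deriv f tb) ^ 2) tb :=
    intervalIntegral.integral_hasDerivAt_right ((hc'.pow 2).intervalIntegrable _ _)
      ((hc'.pow 2).stronglyMeasurableAtFilter _ _) (hc'.pow 2).continuousAt
  have m1 : HasDerivAt (fun v : ℝ => g^2/8*(v-t)^2)
      (g^2/8*(2*(tb-t)^1*1)) tb := (hv.pow 2).const_mul _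
  have m2 : HasDerivAt (fun v : ℝ => g/2*(deriv f v)*(v-t))
      ((g/2*(deriv (deriv f) tb))*(tb-t) + (g/2*(deriv f tb))*1) tb :=
    ((hd2 hf tb).const_mul (g/2)).mul hv
  have m3 : HasDerivAt (fun v : ℝ => g/2*(f v + f t)) (g/2*(deriv f tb)) tb :=
    ((hd1 hf tb).add_const (f t)).const_mul (g/2)
  have m4 : HasDerivAt (fun v : ℝ => ((f v - f t)/(v-t))*(deriv f v))
      ((((deriv f tb)*(tb-t) - (f tb - f t)*1)/(tb-t)^2)*(deriv f tb)
        + ((f tb - f t)/(tb-t))*(deriv (deriv f) tb)) tb := hD.mul (hd2 hf tb)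
  have m5 : HasDerivAt (fun v : ℝ => ((f v - f t)/(v-t))^2/2)
      ((2*((f tb - f t)/(tb-t))^1*(((deriv f tb)*(tb-t) - (f tb - f t)*1)/(tb-t)^2))/2) tb :=
    (hD.pow 2).div_const 2
  have m6 : HasDerivAt (fun v : ℝ => g*(f v)) (g*(deriv f tb)) tb := (hd1 hf tb).const_mul g
  have m7 : HasDerivAt (fun v : ℝ => g/2*(∫ s in t..v, (deriv f s)^2))
      (g/2*((deriv f tb)^2)) tb := d5.const_mul (g/2)
  have m8 : HasDerivAt (fun v : ℝ => g/2*(v-t)*(deriv f v)^2)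
      ((g/2*1)*((deriv f tb)^2) + (g/2*(tb-t))*(2*(deriv f tb)^1*(deriv (deriv f) tb))) tb :=
    (hv.const_mul (g/2)).mul ((hd2 hf tb).pow 2)
  have key := ((((((m1.add m2).add m3).sub m4).add m5).sub m6).sub m7).sub m8
  have heq : H22 g f t tb = (g^2/8*(2*(tb-t)^1*1)
      + ((g/2*(deriv (deriv f) tb))*(tb-t) + (g/2*(deriv f tb))*1)
      + g/2*(deriv f tb)
      - ((((deriv f tb)*(tb-t) - (f tb - f t)*1)/(tb-t)^2)*(deriv f tb)
        + ((f tb - f t)/(tb-t))*(deriv (deriv f) tb))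
      + (2*((f tb - f t)/(tb-t))^1*(((deriv f tb)*(tb-t) - (f tb - f t)*1)/(tb-t)^2))/2
      - g*(deriv f tb) - g/2*((deriv f tb)^2)
      - ((g/2*1)*((deriv f tb)^2) + (g/2*(tb-t))*(2*(deriv f tb)^1*(deriv (deriv f) tb)))) := by
    simp only [H22, Dq]
    field_simp
    ring
  rw [heq]
  exact key


lemma h11_eq (hf : ContDiff ℝ 3 f) {t tb : ℝ} (hlt : t < tb) :
    h11 (genh g f) t tb = H11 g f t tb := by
  have hev : (fun u => h1 (genh g f) u tb) =ᶠ[nhds t] (fun u => H1 g f u tb) := by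
    filter_upwards [Iio_mem_nhds hlt] with u hu
    exact (hasDerivAt_genh_fst hf (ne_of_lt hu)).deriv
  rw [h11, hev.deriv_eq]
  exact (hasDerivAt_H1_fst hf (ne_of_lt hlt)).deriv

lemma h12_eq (hf : ContDiff ℝ 3 f) {t tb : ℝ} (hlt : t < tb) :
    h12 (genh g f) t tb = H12 g f t tb := by
  have hev : (fun v => h1 (genh g f) t v) =ᶠ[nhds tb] (fun v => H1 g f t v) := by
    filter_upwards [Ioi_mem_nhds hlt] with v hv
    exact (hasDerivAt_genh_fst hf (ne_of_lt hv)).deriv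
  rw [h12, hev.deriv_eq]
  exact (hasDerivAt_H1_snd hf (ne_of_lt hlt)).deriv

lemma h22_eq (hf : ContDiff ℝ 3 f) {t tb : ℝ} (hlt : t < tb) :
    h22 (genh g f) t tb = H22 g f t tb := by
  have hev : (fun v => h2 (genh g f) t v) =ᶠ[nhds tb] (fun v => H2 g f t v) := by
    filter_upwards [Ioi_mem_nhds hlt] with v hv
    exact (hasDerivAt_genh_snd hf (ne_of_lt hv)).deriv
  rw [h22, hev.deriv_eq]
  exact (hasDerivAt_H2_snd hf (ne_of_lt hlt)).deriv

lemma exists_bound (hf : ContDiff ℝ 3 f) (hper : ∀ t, f (t + 1) = f t) :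
    ∃ M : ℝ, 0 ≤ M ∧ (∀ x, |deriv f x| ≤ M) ∧ (∀ x, |deriv (deriv f) x| ≤ M) ∧
      (∀ a b : ℝ, |f b - f a| ≤ M * |b - a|) := by
  have hp : Function.Periodic f 1 := hper
  have hc' : Continuous (deriv f) := hf.continuous_deriv (by norm_num)
  have hfeq : (fun y => f (y + 1)) = f := funext hper
  have hp1 : Function.Periodic (deriv f) 1 := by
    intro x
    rw [← deriv_comp_add_const, hfeq]
  have hc'' : Continuous (deriv (deriv f)) := (contDiff_deriv hf).continuous_deriv (by norm_num)
  have hdfeq : (fun y => deriv f (y + 1)) = deriv f := funext hp1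
  have hp2 : Function.Periodic (deriv (deriv f)) 1 := by
    intro x
    rw [← deriv_comp_add_const, hdfeq]
  obtain ⟨C1, hC1⟩ := isBounded_iff_forall_norm_le.mp
    (hp1.isBounded_of_continuous one_ne_zero hc')
  obtain ⟨C2, hC2⟩ := isBounded_iff_forall_norm_le.mp
    (hp2.isBounded_of_continuous one_ne_zero hc'')
  refine ⟨max 0 (max C1 C2), le_max_left _ _, fun x => ?_, fun x => ?_, fun a b => ?_⟩
  · exact le_trans (hC1 _ (Set.mem_range_self x)) (le_trans (le_max_left _ _) (le_max_right _ _))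
  · exact le_trans (hC2 _ (Set.mem_range_self x)) (le_trans (le_max_right _ _) (le_max_right _ _))
  · have := Convex.norm_image_sub_le_of_norm_deriv_le (s := (Set.univ : Set ℝ)) (C := max 0 (max C1 C2))
      (f := f) (fun x _ => (hf.differentiable (by norm_num)) x)
      (fun x _ => le_trans (hC1 _ (Set.mem_range_self x))
        (le_trans (le_max_left _ _) (le_max_right _ _)))
      convex_univ (Set.mem_univ a) (Set.mem_univ b)
    simpa [Real.norm_eq_abs] using this


lemma segment_facts (hg : 0 < g) {M : ℝ} (hM0 : 0 ≤ M)
    (hM1 : ∀ x, |deriv f x| ≤ M) (hMl : ∀ a b : ℝ, |f b - f a| ≤ M * |b - a|)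
    {t e tb eb : ℝ} (hrel : TennisRel g f t e tb eb)
    (he : (4*M + g + 1)^2/2 ≤ e) (heb : (4*M + g + 1)^2/2 ≤ eb) :
    1 ≤ tb - t ∧ |Dq f t tb| ≤ M ∧
    g/2*(tb - t) = Real.sqrt (2*e) - Dq f t tb + deriv f t ∧
    Real.sqrt (2*eb) = g/2*(tb - t) - Dq f t tb + deriv f tb := by
  obtain ⟨hlt, htime, hen⟩ := hrel
  have hτ : 0 < tb - t := sub_pos.2 hlt
  have hD : |Dq f t tb| ≤ M := by
    rw [Dq, abs_div, abs_of_pos hτ, div_le_iff₀ hτ]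
    calc |f tb - f t| ≤ M * |tb - t| := hMl t tb
      _ = M * (tb - t) := by rw [abs_of_pos hτ]
  have hsq : 4*M + g + 1 ≤ Real.sqrt (2*e) := by
    have h1 : (4*M + g + 1)^2 ≤ 2*e := by linarith
    calc 4*M + g + 1 = Real.sqrt ((4*M + g + 1)^2) := (Real.sqrt_sq (by positivity)).symm
      _ ≤ Real.sqrt (2*e) := Real.sqrt_le_sqrt h1
  have htime' : g/2*(tb - t) = Real.sqrt (2*e) - Dq f t tb + deriv f t := by
    have h2 : tb - t = 2/g*(Real.sqrt (2*e)) - 2/g*(Dq f t tb) + 2/g*(deriv f t) := by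
      rw [Dq]; linarith [htime]
    rw [h2]; field_simp
  have hDl := abs_le.mp hD
  have hp1 := abs_le.mp (hM1 t)
  have hp2 := abs_le.mp (hM1 tb)
  have hτ1 : 1 ≤ tb - t := by nlinarith [htime']
  refine ⟨hτ1, hD, htime', ?_⟩
  have hX : (0:ℝ) ≤ Real.sqrt (2*e) - 2*(Dq f t tb) + deriv f tb + deriv f t := by
    linarith
  have h2eb : 2*eb
      = (Real.sqrt (2*e) - 2*(Dq f t tb) + deriv f tb + deriv f t)^2 := by
    rw [hen, Dq]; ring
  rw [h2eb, Real.sqrt_sq hX]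
  linarith [htime']


end lemmas

set_option maxHeartbeats 2000000 in
/-- uniform asymptotic estimates for the second partial
derivatives of the generating function along orbit segments of the tennis map
with large energies. -/
theorem second_partials_asymptotics (g : ℝ) (hg : 0 < g)
    (f : ℝ → ℝ) (hf : ContDiff ℝ 3 f) (hper : ∀ t, f (t + 1) = f t) :
    ∃ C₀ > (0 : ℝ), ∃ E₀ > (0 : ℝ),
      ∀ tm1 t0 t1 em1 e0 e1 : ℝ,
        tm1 < t0 → t0 < t1 →
        E₀ ≤ em1 → E₀ ≤ e0 → E₀ ≤ e1 →
        TennisRel g f tm1 em1 t0 e0 → TennisRel g f t0 e0 t1 e1 →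
        |h22 (genh g f) tm1 t0 + h11 (genh g f) t0 t1
            - Real.sqrt (2 * e0) * (g + 2 * deriv (deriv f) t0)| ≤ C₀ ∧
        |(-h12 (genh g f) tm1 t0) - Real.sqrt (2 * e0) * (g / 2)| ≤ C₀ ∧
        |(-h12 (genh g f) t0 t1) - Real.sqrt (2 * e0) * (g / 2)| ≤ C₀ := by

  obtain ⟨M, hM0, hM1, hM2, hMl⟩ := exists_bound hf hper
  refine ⟨g*M + 2*g*M + 8*M^2 + 3*g*M^2 + 8*M^3 + 1, by positivity,
    (4*M + g + 1)^2/2, by positivity, ?_⟩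
  intro tm1 t0 t1 em1 e0 e1 hlt1 hlt2 hE1 hE2 hE3 hrel1 hrel2
  obtain ⟨hτ1, hDm, _, hsa⟩ := segment_facts hg hM0 hM1 hMl hrel1 hE1 hE2
  obtain ⟨hτ2, hDp, hsb, _⟩ := segment_facts hg hM0 hM1 hMl hrel2 hE2 hE3
  set s0 := Real.sqrt (2*e0) with hs0
  set Dm := Dq f tm1 t0 with hDmdef
  set Dp := Dq f t0 t1 with hDpdef
  set p := deriv f t0 with hpdef
  set q := deriv (deriv f) t0 with hqdef
  set pm := deriv f tm1 with hpmdef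
  set pp := deriv f t1 with hppdef
  have ha : g/2*(t0 - tm1) = s0 + Dm - p := by linarith [hsa]
  have hb : g/2*(t1 - t0) = s0 - Dp + p := hsb
  have hDml := abs_le.mp hDm
  have hDpl := abs_le.mp hDp
  have hpl := abs_le.mp (hM1 t0)
  have hpml := abs_le.mp (hM1 tm1)
  have hppl := abs_le.mp (hM1 t1)
  have hql := abs_le.mp (hM2 t0)
  have hτ1' : (0:ℝ) < t0 - tm1 := by linarith
  have hτ2' : (0:ℝ) < t1 - t0 := by linarith
  -- quadratic bounds
  have sq1 : (p - Dm)^2/(t0 - tm1) ≤ 4*M^2 := by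
    have h1 : (p - Dm)^2 ≤ 4*M^2 := by
      have h0 : (p - Dm)^2 ≤ (2*M)^2 := sq_le_sq' (by linarith) (by linarith)
      linarith [h0]
    calc (p - Dm)^2/(t0 - tm1) ≤ (p - Dm)^2 := div_le_self (by positivity) hτ1
      _ ≤ 4*M^2 := h1
  have sq2 : (Dp - p)^2/(t1 - t0) ≤ 4*M^2 := by
    have h1 : (Dp - p)^2 ≤ 4*M^2 := by
      have h0 : (Dp - p)^2 ≤ (2*M)^2 := sq_le_sq' (by linarith) (by linarith)
      linarith [h0]
    calc (Dp - p)^2/(t1 - t0) ≤ (Dp - p)^2 := div_le_self (by positivity) hτ2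
      _ ≤ 4*M^2 := h1
  refine ⟨?_, ?_, ?_⟩
  · rw [h22_eq hf hlt1, h11_eq hf hlt2]
    have key : H22 g f tm1 t0 + H11 g f t0 t1 - s0*(g + 2*q)
        = g/2*(Dm - Dp) + (-((p - Dm)^2/(t0 - tm1))) + (-((Dp - p)^2/(t1 - t0)))
          + (-(2*g*p^2)) + 2*(2*p - Dp - Dm)*p*q := by
      simp only [H22, H11, ← hDmdef, ← hDpdef, ← hpdef, ← hqdef]
      linear_combination (g/2 + q - 2*p*q) * ha + (g/2 + q + 2*p*q) * hb
    rw [key]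
    have b1 : |g/2*(Dm - Dp)| ≤ g*M := by
      rw [abs_mul, abs_of_pos (by positivity : (0:ℝ) < g/2)]
      have h0 : |Dm - Dp| ≤ 2*M := abs_le.mpr ⟨by linarith, by linarith⟩
      calc g/2*|Dm - Dp| ≤ g/2*(2*M) := by gcongr
        _ = g*M := by ring
    have b2 : |(-((p - Dm)^2/(t0 - tm1)))| ≤ 4*M^2 := by
      rw [abs_neg, abs_of_nonneg (by positivity)]; exact sq1
    have b3 : |(-((Dp - p)^2/(t1 - t0)))| ≤ 4*M^2 := by
      rw [abs_neg, abs_of_nonneg (by positivity)]; exact sq2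
    have b4 : |(-(2*g*p^2))| ≤ 2*g*M^2 := by
      rw [abs_neg, abs_of_nonneg (by positivity)]
      have h0 : p^2 ≤ M^2 := sq_le_sq' (by linarith) (by linarith)
      have h2 := mul_le_mul_of_nonneg_left h0 (by positivity : (0:ℝ) ≤ 2*g)
      linarith [h2]
    have b5 : |2*(2*p - Dp - Dm)*p*q| ≤ 8*M^3 := by
      have h1 : |2*p - Dp - Dm| ≤ 4*M := abs_le.mpr ⟨by linarith, by linarith⟩
      calc |2*(2*p - Dp - Dm)*p*q| = 2 * |2*p - Dp - Dm| * |p| * |q| := by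
            rw [abs_mul, abs_mul, abs_mul, abs_two]
        _ ≤ 2*(4*M)*M*M := by gcongr <;> first | exact h1 | exact hM1 t0 | exact hM2 t0
        _ = 8*M^3 := by ring
    calc |_| ≤ |g/2*(Dm - Dp) + (-((p - Dm)^2/(t0 - tm1))) + (-((Dp - p)^2/(t1 - t0)))
          + (-(2*g*p^2))| + |2*(2*p - Dp - Dm)*p*q| := abs_add_le _ _
      _ ≤ (|g/2*(Dm - Dp) + (-((p - Dm)^2/(t0 - tm1))) + (-((Dp - p)^2/(t1 - t0)))|
          + |(-(2*g*p^2))|) + |2*(2*p - Dp - Dm)*p*q| := by gcongr; exact abs_add_le _ _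
      _ ≤ ((|g/2*(Dm - Dp) + (-((p - Dm)^2/(t0 - tm1)))| + |(-((Dp - p)^2/(t1 - t0)))|)
          + |(-(2*g*p^2))|) + |2*(2*p - Dp - Dm)*p*q| := by gcongr; exact abs_add_le _ _
      _ ≤ (((|g/2*(Dm - Dp)| + |(-((p - Dm)^2/(t0 - tm1)))|) + |(-((Dp - p)^2/(t1 - t0)))|)
          + |(-(2*g*p^2))|) + |2*(2*p - Dp - Dm)*p*q| := by gcongr; exact abs_add_le _ _
      _ ≤ g*M + 2*g*M + 8*M^2 + 3*g*M^2 + 8*M^3 + 1 := by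
          have : (0:ℝ) ≤ g*M := by positivity
          have : (0:ℝ) ≤ g*M^2 := by positivity
          linarith [b1, b2, b3, b4, b5]
  · rw [h12_eq hf hlt1]
    have key : -H12 g f tm1 t0 - s0*(g/2)
        = g/2*(Dm - p) + (-(g/2*(pm - p))) + (-((p - Dm)*(pm - Dm)/(t0 - tm1)))
          + (-(g/2*(p^2 + pm^2))) := by
      simp only [H12, ← hDmdef, ← hpdef, ← hpmdef]
      linear_combination (g/2) * ha
    rw [key]
    have b1 : |g/2*(Dm - p)| ≤ g*M := by
      rw [abs_mul, abs_of_pos (by positivity : (0:ℝ) < g/2)]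
      have h0 : |Dm - p| ≤ 2*M := abs_le.mpr ⟨by linarith, by linarith⟩
      calc g/2*|Dm - p| ≤ g/2*(2*M) := by gcongr
        _ = g*M := by ring
    have b2 : |(-(g/2*(pm - p)))| ≤ g*M := by
      rw [abs_neg, abs_mul, abs_of_pos (by positivity : (0:ℝ) < g/2)]
      have h0 : |pm - p| ≤ 2*M := abs_le.mpr ⟨by linarith, by linarith⟩
      calc g/2*|pm - p| ≤ g/2*(2*M) := by gcongr
        _ = g*M := by ring
    have b3 : |(-((p - Dm)*(pm - Dm)/(t0 - tm1)))| ≤ 4*M^2 := by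
      rw [abs_neg, abs_div, abs_of_pos hτ1']
      have h1 : |p - Dm| ≤ 2*M := abs_le.mpr ⟨by linarith, by linarith⟩
      have h2 : |pm - Dm| ≤ 2*M := abs_le.mpr ⟨by linarith, by linarith⟩
      calc |(p - Dm)*(pm - Dm)|/(t0 - tm1) ≤ |(p - Dm)*(pm - Dm)| :=
            div_le_self (abs_nonneg _) hτ1
        _ = |p - Dm| * |pm - Dm| := abs_mul _ _
        _ ≤ (2*M)*(2*M) := by gcongr
        _ = 4*M^2 := by ring
    have b4 : |(-(g/2*(p^2 + pm^2)))| ≤ g*M^2 := by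
      rw [abs_neg, abs_of_nonneg (by positivity)]
      have h0 : p^2 ≤ M^2 := sq_le_sq' (by linarith) (by linarith)
      have h0' : pm^2 ≤ M^2 := sq_le_sq' (by linarith) (by linarith)
      have h2 := mul_le_mul_of_nonneg_left (add_le_add h0 h0') (by positivity : (0:ℝ) ≤ g/2)
      linarith [h2]
    calc |_| ≤ |g/2*(Dm - p) + (-(g/2*(pm - p))) + (-((p - Dm)*(pm - Dm)/(t0 - tm1)))|
          + |(-(g/2*(p^2 + pm^2)))| := abs_add_le _ _
      _ ≤ (|g/2*(Dm - p) + (-(g/2*(pm - p)))| + |(-((p - Dm)*(pm - Dm)/(t0 - tm1)))|)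
          + |(-(g/2*(p^2 + pm^2)))| := by gcongr; exact abs_add_le _ _
      _ ≤ ((|g/2*(Dm - p)| + |(-(g/2*(pm - p)))|) + |(-((p - Dm)*(pm - Dm)/(t0 - tm1)))|)
          + |(-(g/2*(p^2 + pm^2)))| := by gcongr; exact abs_add_le _ _
      _ ≤ g*M + 2*g*M + 8*M^2 + 3*g*M^2 + 8*M^3 + 1 := by
          have : (0:ℝ) ≤ g*M := by positivity
          have : (0:ℝ) ≤ g*M^2 := by positivity
          have : (0:ℝ) ≤ M^2 := by positivity
          have : (0:ℝ) ≤ M^3 := by positivity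
          linarith [b1, b2, b3, b4]
  · rw [h12_eq hf hlt2]
    have key : -H12 g f t0 t1 - s0*(g/2)
        = (-(g/2*(Dp - p))) + (-(g/2*(p - pp))) + (-((pp - Dp)*(p - Dp)/(t1 - t0)))
          + (-(g/2*(pp^2 + p^2))) := by
      simp only [H12, ← hDpdef, ← hpdef, ← hppdef]
      linear_combination (g/2) * hb
    rw [key]
    have b1 : |(-(g/2*(Dp - p)))| ≤ g*M := by
      rw [abs_neg, abs_mul, abs_of_pos (by positivity : (0:ℝ) < g/2)]
      have h0 : |Dp - p| ≤ 2*M := abs_le.mpr ⟨by linarith, by linarith⟩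
      calc g/2*|Dp - p| ≤ g/2*(2*M) := by gcongr
        _ = g*M := by ring
    have b2 : |(-(g/2*(p - pp)))| ≤ g*M := by
      rw [abs_neg, abs_mul, abs_of_pos (by positivity : (0:ℝ) < g/2)]
      have h0 : |p - pp| ≤ 2*M := abs_le.mpr ⟨by linarith, by linarith⟩
      calc g/2*|p - pp| ≤ g/2*(2*M) := by gcongr
        _ = g*M := by ring
    have b3 : |(-((pp - Dp)*(p - Dp)/(t1 - t0)))| ≤ 4*M^2 := by
      rw [abs_neg, abs_div, abs_of_pos hτ2']
      have h1 : |pp - Dp| ≤ 2*M := abs_le.mpr ⟨by linarith, by linarith⟩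
      have h2 : |p - Dp| ≤ 2*M := abs_le.mpr ⟨by linarith, by linarith⟩
      calc |(pp - Dp)*(p - Dp)|/(t1 - t0) ≤ |(pp - Dp)*(p - Dp)| :=
            div_le_self (abs_nonneg _) hτ2
        _ = |pp - Dp| * |p - Dp| := abs_mul _ _
        _ ≤ (2*M)*(2*M) := by gcongr
        _ = 4*M^2 := by ring
    have b4 : |(-(g/2*(pp^2 + p^2)))| ≤ g*M^2 := by
      rw [abs_neg, abs_of_nonneg (by positivity)]
      have h0 : p^2 ≤ M^2 := sq_le_sq' (by linarith) (by linarith)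
      have h0' : pp^2 ≤ M^2 := sq_le_sq' (by linarith) (by linarith)
      have h2 := mul_le_mul_of_nonneg_left (add_le_add h0' h0) (by positivity : (0:ℝ) ≤ g/2)
      linarith [h2]
    calc |_| ≤ |(-(g/2*(Dp - p))) + (-(g/2*(p - pp))) + (-((pp - Dp)*(p - Dp)/(t1 - t0)))|
          + |(-(g/2*(pp^2 + p^2)))| := abs_add_le _ _
      _ ≤ (|(-(g/2*(Dp - p))) + (-(g/2*(p - pp)))| + |(-((pp - Dp)*(p - Dp)/(t1 - t0)))|)
          + |(-(g/2*(pp^2 + p^2)))| := by gcongr; exact abs_add_le _ _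
      _ ≤ ((|(-(g/2*(Dp - p)))| + |(-(g/2*(p - pp)))|) + |(-((pp - Dp)*(p - Dp)/(t1 - t0)))|)
          + |(-(g/2*(pp^2 + p^2)))| := by gcongr; exact abs_add_le _ _
      _ ≤ g*M + 2*g*M + 8*M^2 + 3*g*M^2 + 8*M^3 + 1 := by
          have : (0:ℝ) ≤ g*M := by positivity
          have : (0:ℝ) ≤ g*M^2 := by positivity
          have : (0:ℝ) ≤ M^2 := by positivity
          have : (0:ℝ) ≤ M^3 := by positivity
          linarith [b1, b2, b3, b4]
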